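/- arXiv:2207.01699 — 2 statements merged into one kernel-verified Lean document; each statement's English description precedes it below -/
import Mathlib

section
/- Let H be a graph possibly with loops and G an H-colored complete graph of order n ≥ 3, such that for every x ∈ V(G), G_x is a complete k_x-partite graph with k_x ≥ (n+1)/2, and G contains no cycle of length 4 with exactly 3 obstructions. Then every vertex of G is contained in an H-cycle of length 3. -/
variable {V C : Type*}

/-- The set of edges of `G` incident with `x` (the vertex set of the auxiliary graph `G_x`). -/
def Inc (G : SimpleGraph V) (x : V) : Set (Sym2 V) :=
  {e | e ∈ G.edgeSet ∧ x ∈ e}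

/-- `P` witnesses that the auxiliary graph `G_x` (on the edges of `G` incident with `x`,
with two distinct edges adjacent iff their colors are adjacent in `H`, i.e. related by `EH`)
is a complete `k`-partite graph with parts the fibers of `P`. -/
def IsPartitionAt (G : SimpleGraph V) (EH : C → C → Prop) (c : Sym2 V → C)
    (x : V) (k : ℕ) (P : Sym2 V → Fin k) : Prop :=
  (∀ j : Fin k, ∃ e ∈ Inc G x, P e = j) ∧
    ∀ a ∈ Inc G x, ∀ b ∈ Inc G x, a ≠ b → (EH (c a) (c b) ↔ P a ≠ P b)

/-- `x` is an obstruction of the walk `(u, x, w)`. -/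
def Obstr (EH : C → C → Prop) (c : Sym2 V → C) (u x w : V) : Prop :=
  ¬ EH (c s(u, x)) (c s(x, w))

def Exactly2Of3 (o1 o2 o3 : Prop) : Prop :=
  (¬o1 ∧ o2 ∧ o3) ∨ (o1 ∧ ¬o2 ∧ o3) ∨ (o1 ∧ o2 ∧ ¬o3)

def Exactly3Of4 (o1 o2 o3 o4 : Prop) : Prop :=
  (¬o1 ∧ o2 ∧ o3 ∧ o4) ∨ (o1 ∧ ¬o2 ∧ o3 ∧ o4) ∨
    (o1 ∧ o2 ∧ ¬o3 ∧ o4) ∨ (o1 ∧ o2 ∧ o3 ∧ ¬o4)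

/-- `G` contains a cycle of length 3 with exactly 2 obstructions. -/
def Cycle3Obstr2 (G : SimpleGraph V) (EH : C → C → Prop) (c : Sym2 V → C) : Prop :=
  ∃ x y z : V, x ≠ y ∧ x ≠ z ∧ y ≠ z ∧ G.Adj x y ∧ G.Adj y z ∧ G.Adj z x ∧
    Exactly2Of3 (Obstr EH c z x y) (Obstr EH c x y z) (Obstr EH c y z x)

/-- `G` contains a cycle of length 4 with exactly 3 obstructions. -/
def Cycle4Obstr3 (G : SimpleGraph V) (EH : C → C → Prop) (c : Sym2 V → C) : Prop :=
  ∃ a b d e : V, a ≠ b ∧ a ≠ d ∧ a ≠ e ∧ b ≠ d ∧ b ≠ e ∧ d ≠ e ∧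
    G.Adj a b ∧ G.Adj b d ∧ G.Adj d e ∧ G.Adj e a ∧
    Exactly3Of4 (Obstr EH c e a b) (Obstr EH c a b d) (Obstr EH c b d e) (Obstr EH c d e a)

/-- `v` is contained in an `H`-cycle of length 3. -/
def HCycle3Through (G : SimpleGraph V) (EH : C → C → Prop) (c : Sym2 V → C) (v : V) : Prop :=
  ∃ x y : V, v ≠ x ∧ v ≠ y ∧ x ≠ y ∧ G.Adj v x ∧ G.Adj x y ∧ G.Adj y v ∧
    EH (c s(v, x)) (c s(x, y)) ∧ EH (c s(x, y)) (c s(y, v)) ∧ EH (c s(y, v)) (c s(v, x))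

/-- `v` is contained in an `H`-cycle of length 4. -/
def HCycle4Through (G : SimpleGraph V) (EH : C → C → Prop) (c : Sym2 V → C) (v : V) : Prop :=
  ∃ x y z : V, v ≠ x ∧ v ≠ y ∧ v ≠ z ∧ x ≠ y ∧ x ≠ z ∧ y ≠ z ∧
    G.Adj v x ∧ G.Adj x y ∧ G.Adj y z ∧ G.Adj z v ∧
    EH (c s(v, x)) (c s(x, y)) ∧ EH (c s(x, y)) (c s(y, z)) ∧
      EH (c s(y, z)) (c s(z, v)) ∧ EH (c s(z, v)) (c s(v, x))

/-- `A` has the `H`-dependence property with respect to `v`. -/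
def HDep (G : SimpleGraph V) (EH : C → C → Prop) (c : Sym2 V → C) (A : Set V) (v : V) : Prop :=
  ∀ a ∈ A, ∀ a' ∈ A, a ≠ a' → G.Adj v a → G.Adj a a' → G.Adj a' v →
    (¬ EH (c s(v, a)) (c s(a, a'))) ∨ (¬ EH (c s(a, a')) (c s(a', v)))

/-- The subgraph of `G` induced by `A` (kept on the same vertex type). -/
def inducedSub (G : SimpleGraph V) (A : Set V) : SimpleGraph V where
  Adj a b := G.Adj a b ∧ a ∈ A ∧ b ∈ A
  symm := ⟨fun a b h => ⟨h.1.symm, h.2.2, h.2.1⟩⟩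
  loopless := ⟨fun a h => G.loopless.irrefl a h.1⟩

theorem stmt_6 {V C : Type*} [Fintype V] (G : SimpleGraph V) (EH : C → C → Prop)
    (hsym : Symmetric EH) (c : Sym2 V → C)
    (hcomp : ∀ a b : V, a ≠ b → G.Adj a b)
    (hn : 3 ≤ Fintype.card V)
    (hmulti : ∀ x : V, ∃ (k : ℕ) (P : Sym2 V → Fin k),
      IsPartitionAt G EH c x k P ∧ Fintype.card V + 1 ≤ 2 * k)
    (hno4 : ¬ Cycle4Obstr3 G EH c) :
    ∀ v : V, HCycle3Through G EH c v := by
  classical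
  intro v
  by_contra hncyc
  choose k P hP hk using hmulti
  set n := Fintype.card V with hn_def
  -- basic facts about Inc membership
  have hInc : ∀ x w : V, x ≠ w → s(x, w) ∈ Inc G x := by
    intro x w h
    exact ⟨(SimpleGraph.mem_edgeSet G).2 (hcomp x w h), Sym2.mem_mk_left x w⟩
  -- translation of EH into partition inequalities
  have key : ∀ x w w' : V, x ≠ w → x ≠ w' → w ≠ w' →
      (EH (c s(x, w)) (c s(x, w')) ↔ P x s(x, w) ≠ P x s(x, w')) := by
    intro x w w' h1 h2 h3
    refine (hP x).2 _ (hInc x w h1) _ (hInc x w' h2) ?_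
    intro he
    exact h3 (Sym2.congr_right.1 he)
  -- no H-triangle through v, in partition form
  have hT : ∀ x y : V, v ≠ x → v ≠ y → x ≠ y →
      P v s(v, x) ≠ P v s(v, y) → P x s(x, v) ≠ P x s(x, y) →
      P y s(y, v) ≠ P y s(y, x) → False := by
    intro x y hvx hvy hxy h1 h2 h3
    apply hncyc
    refine ⟨x, y, hvx, hvy, hxy, hcomp v x hvx, hcomp x y hxy, hcomp y v (Ne.symm hvy),
      ?_, ?_, ?_⟩
    · rw [show s(v, x) = s(x, v) from Sym2.eq_swap]
      exact (key x v y (Ne.symm hvx) hxy hvy).2 h2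
    · rw [show s(x, y) = s(y, x) from Sym2.eq_swap]
      rw [show s(y, v) = s(y, v) from rfl]
      have := (key y x v (Ne.symm hxy) (Ne.symm hvy) (fun h => hvx h.symm)).2
        (fun h => h3 h.symm)
      exact this
    · rw [show s(y, v) = s(v, y) from Sym2.eq_swap]
      exact (key v y x hvy hvx (Ne.symm hxy)).2 (fun h => h1 h.symm)
  -- surjectivity of partitions
  have hsurj : ∀ x : V, ∀ j : Fin (k x), ∃ w : V, w ≠ x ∧ P x s(x, w) = j := by
    intro x j
    obtain ⟨e, he, hej⟩ := (hP x).1 j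
    obtain ⟨hedge, hxe⟩ := he
    obtain ⟨w, rfl⟩ := Sym2.mem_iff_exists.1 hxe
    exact ⟨w, Ne.symm ((SimpleGraph.mem_edgeSet G).1 hedge).ne, hej⟩
  -- the set of vertices that are singleton classes at v
  set W : Finset V := Finset.univ.erase v with hW
  have hmemW : ∀ w : V, w ∈ W ↔ w ≠ v := by
    intro w; simp [hW]
  set T : Finset V := W.filter
    (fun b => ∀ w ∈ W, w ≠ b → P v s(v, w) ≠ P v s(v, b)) with hTdef
  have hTv : ∀ b ∈ T, b ≠ v := by
    intro b hb
    exact (hmemW b).1 (Finset.mem_filter.1 hb).1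
  have hsing : ∀ b ∈ T, ∀ w : V, w ≠ v → w ≠ b → P v s(v, w) ≠ P v s(v, b) := by
    intro b hb w h1 h2
    exact (Finset.mem_filter.1 hb).2 w ((hmemW w).2 h1) h2
  -- Claim (i): for a singleton b and y outside the v-class of pi_b, y merges b with v
  have hi : ∀ b ∈ T, ∀ y : V, y ≠ v → y ≠ b →
      P b s(b, y) ≠ P b s(b, v) → P y s(y, b) = P y s(y, v) := by
    intro b hb y hyv hyb hby
    by_contra hne
    exact hT y b (Ne.symm hyv) (Ne.symm (hTv b hb)) hyb
      (hsing b hb y hyv hyb) (fun h => hne h.symm) (fun h => hby h.symm)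
  -- Claim (ii): pi_v and pi_b agree outside the v-class of pi_b (uses hno4)
  have hii : ∀ b ∈ T, ∀ y y' : V, y ≠ v → y ≠ b → P b s(b, y) ≠ P b s(b, v) →
      y' ≠ v → y' ≠ b → P b s(b, y') ≠ P b s(b, v) → y ≠ y' →
      (P v s(v, y) = P v s(v, y') ↔ P b s(b, y) = P b s(b, y')) := by
    intro b hb y y' hyv hyb hy hy'v hy'b hy' hyy'
    have hbv := hTv b hb
    have O1 : Obstr EH c y' v y ↔ P v s(v, y) = P v s(v, y') := by
      unfold Obstr
      rw [show s(y', v) = s(v, y') from Sym2.eq_swap]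
      rw [key v y' y (Ne.symm hy'v) (Ne.symm hyv) (Ne.symm hyy')]
      rw [not_ne_iff]
      exact eq_comm
    have O3 : Obstr EH c y b y' ↔ P b s(b, y) = P b s(b, y') := by
      unfold Obstr
      rw [show s(y, b) = s(b, y) from Sym2.eq_swap]
      rw [key b y y' (Ne.symm hyb) (Ne.symm hy'b) hyy']
      exact not_ne_iff
    have ho2 : Obstr EH c v y b := by
      unfold Obstr
      rw [show s(v, y) = s(y, v) from Sym2.eq_swap]
      rw [key y v b hyv hyb (Ne.symm hbv)]
      rw [not_ne_iff]
      exact (hi b hb y hyv hyb hy).symm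
    have ho4 : Obstr EH c b y' v := by
      unfold Obstr
      rw [show s(b, y') = s(y', b) from Sym2.eq_swap]
      rw [key y' b v hy'b hy'v hbv]
      rw [not_ne_iff]
      exact hi b hb y' hy'v hy'b hy'
    by_contra hiff
    apply hno4
    refine ⟨v, y, b, y', Ne.symm hyv, Ne.symm hbv, Ne.symm hy'v, hyb, hyy', Ne.symm hy'b,
      hcomp v y (Ne.symm hyv), hcomp y b hyb, hcomp b y' (Ne.symm hy'b),
      hcomp y' v hy'v, ?_⟩
    by_cases hA : P v s(v, y) = P v s(v, y')
    · have hB : ¬ P b s(b, y) = P b s(b, y') := by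
        intro hB
        exact hiff ⟨fun _ => hB, fun _ => hA⟩
      exact Or.inr (Or.inr (Or.inl ⟨O1.2 hA, ho2, fun h3 => hB (O3.1 h3), ho4⟩))
    · have hB : P b s(b, y) = P b s(b, y') := by
        by_contra hB
        exact hiff ⟨fun h => absurd h hA, fun h => absurd h hB⟩
      exact Or.inl ⟨fun h1 => hA (O1.1 h1), ho2, O3.2 hB, ho4⟩
  -- Step 1 : counting singletons : 2 * k v + 1 ≤ n + T.card
  have hWcard : W.card + 1 = n := by
    rw [hW, Finset.card_erase_of_mem (Finset.mem_univ v), Finset.card_univ]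
    omega
  set I : Finset (Fin (k v)) := T.image (fun b => P v s(v, b)) with hI
  have hIcard : I.card = T.card := by
    rw [hI]
    apply Finset.card_image_of_injOn
    intro b hb b' hb' heq
    by_contra hne
    exact hsing b' (Finset.mem_coe.1 hb') b (hTv b (Finset.mem_coe.1 hb)) hne heq
  have hfib_lb : ∀ j : Fin (k v),
      (if j ∈ I then 1 else 2) ≤ (W.filter (fun w => P v s(v, w) = j)).card := by
    intro j
    obtain ⟨w, hwv, hwj⟩ := hsurj v j
    have hwW : w ∈ W.filter (fun w => P v s(v, w) = j) :=
      Finset.mem_filter.2 ⟨(hmemW w).2 hwv, hwj⟩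
    by_cases hj : j ∈ I
    · rw [if_pos hj]
      exact Finset.card_pos.2 ⟨w, hwW⟩
    · rw [if_neg hj]
      by_contra hlt
      push_neg at hlt
      have hle : (W.filter (fun w => P v s(v, w) = j)).card ≤ 1 := by omega
      have hwT : w ∈ T := by
        rw [hTdef]
        refine Finset.mem_filter.2 ⟨(hmemW w).2 hwv, ?_⟩
        intro w' hw' hne hfeq
        have hw'mem : w' ∈ W.filter (fun w => P v s(v, w) = j) :=
          Finset.mem_filter.2 ⟨hw', by rw [hfeq, hwj]⟩
        exact hne (Finset.card_le_one.1 hle _ hw'mem _ hwW)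
      exact hj (Finset.mem_image.2 ⟨w, hwT, hwj⟩)
  have hstep1 : 2 * k v + 1 ≤ n + T.card := by
    have hfibsum : ∑ j : Fin (k v), (W.filter (fun w => P v s(v, w) = j)).card = W.card :=
      (Finset.card_eq_sum_card_fiberwise (fun w _ => Finset.mem_univ _)).symm
    have hsum_lb : ∑ j : Fin (k v), (if j ∈ I then 1 else 2) ≤ W.card := by
      rw [← hfibsum]
      exact Finset.sum_le_sum (fun j _ => hfib_lb j)
    rw [Finset.sum_ite, Finset.sum_const, Finset.sum_const, smul_eq_mul, smul_eq_mul] at hsum_lb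
    have hpcard : (Finset.univ.filter (fun j => j ∈ I)).card = I.card := by
      rw [Finset.filter_mem_eq_inter, Finset.univ_inter]
    have hsplit : (Finset.univ.filter (fun j => j ∈ I)).card
        + (Finset.univ.filter (fun j => ¬ j ∈ I)).card = k v := by
      rw [Finset.card_filter_add_card_filter_not, Finset.card_univ, Fintype.card_fin]
    omega
  -- Step 3 : for each singleton b, |T ∩ q_b| + k b ≤ k v
  have hstep3 : ∀ b ∈ T,
      (T.filter (fun s_ => s_ ≠ b ∧ P b s(b, s_) = P b s(b, v))).card + k b ≤ k v := by
    intro b hb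
    have hbv := hTv b hb
    obtain ⟨wfn, hwfn⟩ := Classical.axiomOfChoice (hsurj b)
    have hw1 : ∀ j : Fin (k b), wfn j ≠ b := fun j => (hwfn j).1
    have hw2 : ∀ j : Fin (k b), P b s(b, wfn j) = j := fun j => (hwfn j).2
    have hwY : ∀ j : Fin (k b), j ≠ P b s(b, v) →
        wfn j ≠ v ∧ wfn j ≠ b ∧ P b s(b, wfn j) ≠ P b s(b, v) := by
      intro j hj
      have h2 : P b s(b, wfn j) ≠ P b s(b, v) := by rw [hw2]; exact hj
      exact ⟨fun h => h2 (by rw [h]), hw1 j, h2⟩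
    set A : Finset (Fin (k v)) :=
      (Finset.univ.erase (P b s(b, v))).image (fun j => P v s(v, wfn j)) with hA
    have hkb1 : 1 ≤ k b := by
      have := hk b; omega
    have hAcard : A.card + 1 = k b := by
      rw [hA, Finset.card_image_of_injOn, Finset.card_erase_of_mem (Finset.mem_univ _),
        Finset.card_univ, Fintype.card_fin]
      · omega
      · intro j hj j' hj' heq
        have Hj := hwY j (Finset.mem_erase.1 (Finset.mem_coe.1 hj)).1
        have Hj' := hwY j' (Finset.mem_erase.1 (Finset.mem_coe.1 hj')).1
        by_contra hne
        have hww : wfn j ≠ wfn j' := fun h => hne (by rw [← hw2 j, ← hw2 j', h])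
        have := (hii b hb (wfn j) (wfn j') Hj.1 Hj.2.1 Hj.2.2 Hj'.1 Hj'.2.1 Hj'.2.2 hww).1 heq
        exact hne (by rw [← hw2 j, ← hw2 j', this])
    set Tb : Finset V := T.filter (fun s_ => s_ ≠ b ∧ P b s(b, s_) = P b s(b, v)) with hTb
    set B : Finset (Fin (k v)) := Tb.image (fun s_ => P v s(v, s_)) with hB
    have hBcard : B.card = Tb.card := by
      rw [hB]
      apply Finset.card_image_of_injOn
      intro s1 hs1 s2 hs2 heq
      have hs1T := (Finset.mem_filter.1 (Finset.mem_coe.1 hs1)).1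
      have hs2T := (Finset.mem_filter.1 (Finset.mem_coe.1 hs2)).1
      by_contra hne
      exact hsing s2 hs2T s1 (hTv s1 hs1T) hne heq
    have hdisjAB : Disjoint A B := by
      rw [Finset.disjoint_left]
      intro a haA haB
      obtain ⟨j, hj, hja⟩ := Finset.mem_image.1 haA
      obtain ⟨s_, hs_, hsa⟩ := Finset.mem_image.1 haB
      obtain ⟨hsT, hsneb, hsPb⟩ := Finset.mem_filter.1 hs_
      have hjY := hwY j (Finset.mem_erase.1 hj).1
      have hne : wfn j ≠ s_ := by
        intro h
        rw [h] at hjY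
        exact hjY.2.2 hsPb
      exact hsing s_ hsT (wfn j) hjY.1 hne (by rw [hja, hsa])
    have hbA : P v s(v, b) ∉ A := by
      intro hmem
      obtain ⟨j, hj, hja⟩ := Finset.mem_image.1 hmem
      have hjY := hwY j (Finset.mem_erase.1 hj).1
      exact hsing b hb (wfn j) hjY.1 (hw1 j) hja
    have hbB : P v s(v, b) ∉ B := by
      intro hmem
      obtain ⟨s_, hs_, hsa⟩ := Finset.mem_image.1 hmem
      obtain ⟨hsT, hsneb, hsPb⟩ := Finset.mem_filter.1 hs_
      exact hsing b hb s_ (hTv s_ hsT) hsneb hsa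
    have hcards : A.card + B.card + 1 ≤ k v := by
      have hsub : insert (P v s(v, b)) (A ∪ B) ⊆ Finset.univ := Finset.subset_univ _
      have hc1 : (A ∪ B).card = A.card + B.card := Finset.card_union_of_disjoint hdisjAB
      have hc2 : (insert (P v s(v, b)) (A ∪ B)).card = (A ∪ B).card + 1 :=
        Finset.card_insert_of_notMem (by
          rw [Finset.mem_union]
          rintro (h | h)
          · exact hbA h
          · exact hbB h)
      have hc3 := Finset.card_le_card hsub
      rw [Finset.card_univ, Fintype.card_fin] at hc3
      omega
    omega
  -- coverage: every pair of singletons absorbs in at least one direction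
  have hcov : ∀ b ∈ T, ∀ s_ ∈ T, b ≠ s_ →
      P b s(b, s_) = P b s(b, v) ∨ P s_ s(s_, b) = P s_ s(s_, v) := by
    intro b hb s_ hs hbs
    by_contra hcon
    push_neg at hcon
    exact hT b s_ (Ne.symm (hTv b hb)) (Ne.symm (hTv s_ hs)) hbs
      (Ne.symm (hsing b hb s_ (hTv s_ hs) (Ne.symm hbs)))
      (fun h => hcon.1 h.symm) (fun h => hcon.2 h.symm)
  -- Step 4 : double counting
  set t := T.card with ht_def
  set S2 : Finset (V × V) :=
    T.offDiag.filter (fun p => P p.1 s(p.1, p.2) = P p.1 s(p.1, v)) with hS2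
  set u : V × V → V × V :=
    fun p => if P p.1 s(p.1, p.2) = P p.1 s(p.1, v) then p else p.swap with hu
  have hmapsto : ∀ p ∈ T.offDiag, u p ∈ S2 := by
    intro p hp
    obtain ⟨h1, h2, h3⟩ := Finset.mem_offDiag.1 hp
    simp only [hu]
    by_cases hc : P p.1 s(p.1, p.2) = P p.1 s(p.1, v)
    · rw [if_pos hc]
      exact Finset.mem_filter.2 ⟨hp, hc⟩
    · rw [if_neg hc]
      refine Finset.mem_filter.2 ⟨Finset.mem_offDiag.2 ⟨h2, h1, Ne.symm h3⟩, ?_⟩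
      rcases hcov p.1 h1 p.2 h2 h3 with h | h
      · exact absurd h hc
      · exact h
  have h21 : T.offDiag.card ≤ 2 * S2.card := by
    have hcard1 : T.offDiag.card = ∑ q ∈ S2, (T.offDiag.filter (fun p => u p = q)).card :=
      Finset.card_eq_sum_card_fiberwise hmapsto
    have hfib2 : ∀ q ∈ S2, (T.offDiag.filter (fun p => u p = q)).card ≤ 2 := by
      intro q hq
      have hsub : T.offDiag.filter (fun p => u p = q) ⊆ insert q ({q.swap} : Finset (V × V)) := by
        intro p hp
        obtain ⟨hp1, hp2⟩ := Finset.mem_filter.1 hp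
        simp only [hu] at hp2
        by_cases hc : P p.1 s(p.1, p.2) = P p.1 s(p.1, v)
        · rw [if_pos hc] at hp2
          rw [hp2]
          exact Finset.mem_insert_self _ _
        · rw [if_neg hc] at hp2
          have : p = q.swap := by rw [← hp2, Prod.swap_swap]
          rw [this]
          exact Finset.mem_insert_of_mem (Finset.mem_singleton_self _)
      calc (T.offDiag.filter (fun p => u p = q)).card ≤ (insert q ({q.swap} : Finset (V × V))).card :=
            Finset.card_le_card hsub
        _ ≤ 2 := by
            refine le_trans (Finset.card_insert_le _ _) ?_
            rw [Finset.card_singleton]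
      
    calc T.offDiag.card = ∑ q ∈ S2, (T.offDiag.filter (fun p => u p = q)).card := hcard1
      _ ≤ ∑ _q ∈ S2, 2 := Finset.sum_le_sum hfib2
      _ = 2 * S2.card := by rw [Finset.sum_const, smul_eq_mul, mul_comm]
  have hcard2 : S2.card = ∑ b ∈ T, (S2.filter (fun p => p.1 = b)).card :=
    Finset.card_eq_sum_card_fiberwise
      (fun p hp => (Finset.mem_offDiag.1 (Finset.mem_filter.1 hp).1).1)
  have hfibT : ∀ b ∈ T, (S2.filter (fun p => p.1 = b)).card
      ≤ (T.filter (fun s_ => s_ ≠ b ∧ P b s(b, s_) = P b s(b, v))).card := by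
    intro b hb
    apply Finset.card_le_card_of_injOn Prod.snd
    · intro p hp
      obtain ⟨hpS, hpb⟩ := Finset.mem_filter.1 hp
      obtain ⟨hoff, hrel⟩ := Finset.mem_filter.1 hpS
      obtain ⟨h1, h2, h3⟩ := Finset.mem_offDiag.1 hoff
      refine Finset.mem_filter.2 ⟨h2, ?_, ?_⟩
      · rw [← hpb]; exact Ne.symm h3
      · rw [← hpb]; exact hrel
    · intro p hp p' hp' heq
      have h1 := (Finset.mem_filter.1 (Finset.mem_coe.1 hp)).2
      have h2 := (Finset.mem_filter.1 (Finset.mem_coe.1 hp')).2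
      exact Prod.ext (by rw [h1, h2]) heq
  have hperb : ∀ b ∈ T, 2 * (S2.filter (fun p => p.1 = b)).card + (n + 1) ≤ 2 * k v := by
    intro b hb
    have h1 := hstep3 b hb
    have h2 := hfibT b hb
    have h3 := hk b
    omega
  have hsum : 2 * S2.card + t * (n + 1) ≤ t * (2 * k v) := by
    calc 2 * S2.card + t * (n + 1)
        = ∑ b ∈ T, (2 * (S2.filter (fun p => p.1 = b)).card + (n + 1)) := by
          rw [Finset.sum_add_distrib, Finset.sum_const, smul_eq_mul, hcard2,
            Finset.mul_sum, ht_def]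
      _ ≤ ∑ _b ∈ T, 2 * k v := Finset.sum_le_sum hperb
      _ = t * (2 * k v) := by rw [Finset.sum_const, smul_eq_mul, ht_def]
  have ht2 : 2 ≤ t := by
    have := hk v
    omega
  have hoffc : T.offDiag.card + t = t * t := by
    rw [Finset.offDiag_card, ← ht_def]
    have : t ≤ t * t := Nat.le_mul_of_pos_left t (by omega)
    omega
  -- final contradiction
  have hfin1 : t * t + t * (n + 1) ≤ t * (2 * k v) + t := by
    have : t * t ≤ 2 * S2.card + t := by omega
    omega
  have hfin2 : t * (2 * k v) + t ≤ t * (n + t) := by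
    calc t * (2 * k v) + t = t * (2 * k v + 1) := by ring
      _ ≤ t * (n + t) := Nat.mul_le_mul_left t hstep1
  have hexp1 : t * (n + 1) = t * n + t := by ring
  have hexp2 : t * (n + t) = t * n + t * t := by ring
  have : t * t + (t * n + t) ≤ t * n + t * t := by
    rw [← hexp1, ← hexp2]
    exact le_trans hfin1 hfin2
  omega
end

section
/- Let H be a graph possibly with loops and G an H-colored complete graph of order n with 4 ≤ n < 9, such that for every x ∈ V(G), G_x is a complete k_x-partite graph with k_x ≥ (n+1)/2, and G contains no cycle of length 4 with exactly 3 obstructions. Then every vertex of G is contained in an H-cycle of length 4. -/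
variable {V C : Type*}

/-- the "bad pair" (same part / obstruction) relation at a vertex `w`. -/
def badp (EH : C → C → Prop) (c : Sym2 V → C) (w a b : V) : Prop :=
  ¬ EH (c s(w, a)) (c s(w, b))

lemma mem_inc (G : SimpleGraph V) (hcomp : ∀ a b : V, a ≠ b → G.Adj a b) {w a : V}
    (h : a ≠ w) : s(w, a) ∈ Inc G w := by
  refine ⟨?_, Sym2.mem_mk_left w a⟩
  rw [SimpleGraph.mem_edgeSet]
  exact hcomp w a h.symm

lemma edge_ne {w a b : V} (hab : a ≠ b) (ha : a ≠ w) : s(w, a) ≠ s(w, b) := by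
  intro h
  rw [Sym2.eq_iff] at h
  rcases h with ⟨-, h⟩ | ⟨-, h⟩
  · exact hab h
  · exact ha h

lemma badp_iff (G : SimpleGraph V) (EH : C → C → Prop) (c : Sym2 V → C)
    (hcomp : ∀ a b : V, a ≠ b → G.Adj a b) {w : V} {k : ℕ} {P : Sym2 V → Fin k}
    (hpart : IsPartitionAt G EH c w k P) {a b : V} (ha : a ≠ w) (hb : b ≠ w)
    (hab : a ≠ b) : badp EH c w a b ↔ P s(w, a) = P s(w, b) := by
  have := hpart.2 _ (mem_inc G hcomp ha) _ (mem_inc G hcomp hb) (edge_ne hab ha)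
  unfold badp
  rw [this]
  exact not_not

lemma badp_symm (EH : C → C → Prop) (hsym : Symmetric EH) (c : Sym2 V → C)
    {w a b : V} (h : badp EH c w a b) : badp EH c w b a :=
  fun he => h (hsym he)

lemma badp_trans (G : SimpleGraph V) (EH : C → C → Prop) (c : Sym2 V → C)
    (hcomp : ∀ a b : V, a ≠ b → G.Adj a b) {w : V} {k : ℕ} {P : Sym2 V → Fin k}
    (hpart : IsPartitionAt G EH c w k P) {a b d : V} (ha : a ≠ w) (hb : b ≠ w)
    (hd : d ≠ w) (hab : a ≠ b) (hbd : b ≠ d) (had : a ≠ d)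
    (h1 : badp EH c w a b) (h2 : badp EH c w b d) : badp EH c w a d := by
  rw [badp_iff G EH c hcomp hpart ha hb hab] at h1
  rw [badp_iff G EH c hcomp hpart hb hd hbd] at h2
  rw [badp_iff G EH c hcomp hpart ha hd had]
  exact h1.trans h2

lemma excess_bound (G : SimpleGraph V) (EH : C → C → Prop) (c : Sym2 V → C)
    [Fintype V] [DecidableEq V]
    {w : V} {k : ℕ} {P : Sym2 V → Fin k}
    (hpart : IsPartitionAt G EH c w k P)
    (T reps : Finset V) (hTw : w ∉ T)
    (hcover : ∀ u ∈ T, ∃ r ∈ reps, P s(w, u) = P s(w, r)) :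
    k + T.card ≤ (Fintype.card V - 1) + reps.card := by
  classical
  have hTsub : T ⊆ Finset.univ.erase w := by
    intro u hu
    exact Finset.mem_erase.mpr ⟨fun h => hTw (h ▸ hu), Finset.mem_univ u⟩
  have hsurj : (Finset.univ : Finset (Fin k)) ⊆
      (Finset.univ.erase w).image (fun u => P s(w, u)) := by
    intro j _
    obtain ⟨e, he, hpe⟩ := hpart.1 j
    obtain ⟨u, rfl⟩ := (Sym2.mem_iff_exists).mp he.2
    have hu : u ≠ w := by
      rintro rfl
      exact G.irrefl ((SimpleGraph.mem_edgeSet G).mp he.1)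
    exact Finset.mem_image.mpr ⟨u, Finset.mem_erase.mpr ⟨hu, Finset.mem_univ u⟩, hpe⟩
  have hk : k ≤ ((Finset.univ.erase w).image (fun u => P s(w, u))).card := by
    calc k = (Finset.univ : Finset (Fin k)).card := by simp
    _ ≤ _ := Finset.card_le_card hsurj
  have hsplit : Finset.univ.erase w = T ∪ (Finset.univ.erase w \ T) :=
    (Finset.union_sdiff_of_subset hTsub).symm
  have himT : (T.image (fun u => P s(w, u))).card ≤ reps.card := by
    have : T.image (fun u => P s(w, u)) ⊆ reps.image (fun u => P s(w, u)) := by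
      intro j hj
      obtain ⟨u, hu, rfl⟩ := Finset.mem_image.mp hj
      obtain ⟨r, hr, hPr⟩ := hcover u hu
      exact Finset.mem_image.mpr ⟨r, hr, hPr.symm⟩
    exact (Finset.card_le_card this).trans Finset.card_image_le
  have hrest : ((Finset.univ.erase w \ T).image (fun u => P s(w, u))).card ≤
      (Fintype.card V - 1) - T.card := by
    refine Finset.card_image_le.trans ?_
    rw [Finset.card_sdiff_of_subset hTsub, Finset.card_erase_of_mem (Finset.mem_univ w),
      Finset.card_univ]
  have hcard : k ≤ reps.card + ((Fintype.card V - 1) - T.card) := by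
    rw [hsplit, Finset.image_union] at hk
    exact hk.trans ((Finset.card_union_le _ _).trans (by omega))
  have hTle : T.card ≤ Fintype.card V - 1 := by
    have := Finset.card_le_card hTsub
    rwa [Finset.card_erase_of_mem (Finset.mem_univ w), Finset.card_univ] at this
  omega

section Rules

variable (G : SimpleGraph V) (EH : C → C → Prop) (c : Sym2 V → C) [Fintype V] [DecidableEq V]

/-- a bad star of size 3 (class of size ≥ 4) forces `card V ≥ 9`. -/
lemma rule4 (hcomp : ∀ a b : V, a ≠ b → G.Adj a b) {w p a b d : V}
    (hm : ∃ (k : ℕ) (P : Sym2 V → Fin k),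
      IsPartitionAt G EH c w k P ∧ Fintype.card V + 1 ≤ 2 * k)
    (hpw : p ≠ w) (haw : a ≠ w) (hbw : b ≠ w) (hdw : d ≠ w)
    (hpa : p ≠ a) (hpb : p ≠ b) (hpd : p ≠ d) (hab : a ≠ b) (had : a ≠ d) (hbd : b ≠ d)
    (h1 : badp EH c w p a) (h2 : badp EH c w p b) (h3 : badp EH c w p d) :
    9 ≤ Fintype.card V := by
  obtain ⟨k, P, hpart, hk⟩ := hm
  have e1 := (badp_iff G EH c hcomp hpart hpw haw hpa).mp h1
  have e2 := (badp_iff G EH c hcomp hpart hpw hbw hpb).mp h2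
  have e3 := (badp_iff G EH c hcomp hpart hpw hdw hpd).mp h3
  have hb := excess_bound G EH c hpart {p, a, b, d} {p}
    (by simp only [Finset.mem_insert, Finset.mem_singleton]; push_neg
        exact ⟨Ne.symm hpw, Ne.symm haw, Ne.symm hbw, Ne.symm hdw⟩)
    (by intro u hu
        simp only [Finset.mem_insert, Finset.mem_singleton] at hu
        refine ⟨p, Finset.mem_singleton_self p, ?_⟩
        rcases hu with rfl | rfl | rfl | rfl
        · rfl
        · exact e1.symm
        · exact e2.symm
        · exact e3.symm)
  have hcard : ({p, a, b, d} : Finset V).card = 4 := by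
    rw [Finset.card_insert_of_notMem (by simp [hpa, hpb, hpd]),
      Finset.card_insert_of_notMem (by simp [hab, had]),
      Finset.card_insert_of_notMem (by simp [hbd]), Finset.card_singleton]
  rw [hcard, Finset.card_singleton] at hb
  omega

/-- a bad triangle plus a disjoint bad pair forces `card V ≥ 9`. -/
lemma rule32 (hcomp : ∀ a b : V, a ≠ b → G.Adj a b) {w a b d p q : V}
    (hm : ∃ (k : ℕ) (P : Sym2 V → Fin k),
      IsPartitionAt G EH c w k P ∧ Fintype.card V + 1 ≤ 2 * k)
    (haw : a ≠ w) (hbw : b ≠ w) (hdw : d ≠ w) (hpw : p ≠ w) (hqw : q ≠ w)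
    (hab : a ≠ b) (had : a ≠ d) (hbd : b ≠ d)
    (hap : a ≠ p) (haq : a ≠ q) (hbp : b ≠ p) (hbq : b ≠ q)
    (hdp : d ≠ p) (hdq : d ≠ q) (hpq : p ≠ q)
    (h1 : badp EH c w a b) (h2 : badp EH c w a d) (h3 : badp EH c w p q) :
    9 ≤ Fintype.card V := by
  obtain ⟨k, P, hpart, hk⟩ := hm
  have e1 := (badp_iff G EH c hcomp hpart haw hbw hab).mp h1
  have e2 := (badp_iff G EH c hcomp hpart haw hdw had).mp h2
  have e3 := (badp_iff G EH c hcomp hpart hpw hqw hpq).mp h3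
  have hb := excess_bound G EH c hpart {a, b, d, p, q} {a, p}
    (by simp only [Finset.mem_insert, Finset.mem_singleton]; push_neg
        exact ⟨Ne.symm haw, Ne.symm hbw, Ne.symm hdw, Ne.symm hpw, Ne.symm hqw⟩)
    (by intro u hu
        simp only [Finset.mem_insert, Finset.mem_singleton] at hu
        rcases hu with rfl | rfl | rfl | rfl | rfl
        · exact ⟨u, by simp, rfl⟩
        · exact ⟨a, by simp, e1.symm⟩
        · exact ⟨a, by simp, e2.symm⟩
        · exact ⟨u, by simp, rfl⟩
        · exact ⟨p, by simp, e3.symm⟩)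
  have hcard : ({a, b, d, p, q} : Finset V).card = 5 := by
    rw [Finset.card_insert_of_notMem (by simp [hab, had, hap, haq]),
      Finset.card_insert_of_notMem (by simp [hbd, hbp, hbq]),
      Finset.card_insert_of_notMem (by simp [hdp, hdq]),
      Finset.card_insert_of_notMem (by simp [hpq]), Finset.card_singleton]
  have hcard2 : ({a, p} : Finset V).card = 2 := by
    rw [Finset.card_insert_of_notMem (by simp [hap]), Finset.card_singleton]
  rw [hcard, hcard2] at hb
  omega

/-- a bad star of size 2 (class of size ≥ 3) forces `card V ≥ 7`. -/
lemma rule3 (hcomp : ∀ a b : V, a ≠ b → G.Adj a b) {w a b d : V}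
    (hm : ∃ (k : ℕ) (P : Sym2 V → Fin k),
      IsPartitionAt G EH c w k P ∧ Fintype.card V + 1 ≤ 2 * k)
    (haw : a ≠ w) (hbw : b ≠ w) (hdw : d ≠ w)
    (hab : a ≠ b) (had : a ≠ d) (hbd : b ≠ d)
    (h1 : badp EH c w a b) (h2 : badp EH c w a d) :
    7 ≤ Fintype.card V := by
  obtain ⟨k, P, hpart, hk⟩ := hm
  have e1 := (badp_iff G EH c hcomp hpart haw hbw hab).mp h1
  have e2 := (badp_iff G EH c hcomp hpart haw hdw had).mp h2
  have hb := excess_bound G EH c hpart {a, b, d} {a}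
    (by simp only [Finset.mem_insert, Finset.mem_singleton]; push_neg
        exact ⟨Ne.symm haw, Ne.symm hbw, Ne.symm hdw⟩)
    (by intro u hu
        simp only [Finset.mem_insert, Finset.mem_singleton] at hu
        refine ⟨a, Finset.mem_singleton_self a, ?_⟩
        rcases hu with rfl | rfl | rfl
        · rfl
        · exact e1.symm
        · exact e2.symm)
  have hcard : ({a, b, d} : Finset V).card = 3 := by
    rw [Finset.card_insert_of_notMem (by simp [hab, had]),
      Finset.card_insert_of_notMem (by simp [hbd]), Finset.card_singleton]
  rw [hcard, Finset.card_singleton] at hb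
  omega

/-- two disjoint bad pairs force `card V ≥ 7`. -/
lemma rule22 (hcomp : ∀ a b : V, a ≠ b → G.Adj a b) {w a b p q : V}
    (hm : ∃ (k : ℕ) (P : Sym2 V → Fin k),
      IsPartitionAt G EH c w k P ∧ Fintype.card V + 1 ≤ 2 * k)
    (haw : a ≠ w) (hbw : b ≠ w) (hpw : p ≠ w) (hqw : q ≠ w)
    (hab : a ≠ b) (hap : a ≠ p) (haq : a ≠ q) (hbp : b ≠ p) (hbq : b ≠ q) (hpq : p ≠ q)
    (h1 : badp EH c w a b) (h2 : badp EH c w p q) :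
    7 ≤ Fintype.card V := by
  obtain ⟨k, P, hpart, hk⟩ := hm
  have e1 := (badp_iff G EH c hcomp hpart haw hbw hab).mp h1
  have e2 := (badp_iff G EH c hcomp hpart hpw hqw hpq).mp h2
  have hb := excess_bound G EH c hpart {a, b, p, q} {a, p}
    (by simp only [Finset.mem_insert, Finset.mem_singleton]; push_neg
        exact ⟨Ne.symm haw, Ne.symm hbw, Ne.symm hpw, Ne.symm hqw⟩)
    (by intro u hu
        simp only [Finset.mem_insert, Finset.mem_singleton] at hu
        rcases hu with rfl | rfl | rfl | rfl
        · exact ⟨u, by simp, rfl⟩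
        · exact ⟨a, by simp, e1.symm⟩
        · exact ⟨u, by simp, rfl⟩
        · exact ⟨p, by simp, e2.symm⟩)
  have hcard : ({a, b, p, q} : Finset V).card = 4 := by
    rw [Finset.card_insert_of_notMem (by simp [hab, hap, haq]),
      Finset.card_insert_of_notMem (by simp [hbp, hbq]),
      Finset.card_insert_of_notMem (by simp [hpq]), Finset.card_singleton]
  have hcard2 : ({a, p} : Finset V).card = 2 := by
    rw [Finset.card_insert_of_notMem (by simp [hap]), Finset.card_singleton]
  rw [hcard, hcard2] at hb
  omega

/-- any bad pair forces `card V ≥ 5`. -/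
lemma rule2 (hcomp : ∀ a b : V, a ≠ b → G.Adj a b) {w a b : V}
    (hm : ∃ (k : ℕ) (P : Sym2 V → Fin k),
      IsPartitionAt G EH c w k P ∧ Fintype.card V + 1 ≤ 2 * k)
    (haw : a ≠ w) (hbw : b ≠ w) (hab : a ≠ b)
    (h1 : badp EH c w a b) :
    5 ≤ Fintype.card V := by
  obtain ⟨k, P, hpart, hk⟩ := hm
  have e1 := (badp_iff G EH c hcomp hpart haw hbw hab).mp h1
  have hb := excess_bound G EH c hpart {a, b} {a}
    (by simp only [Finset.mem_insert, Finset.mem_singleton]; push_neg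
        exact ⟨Ne.symm haw, Ne.symm hbw⟩)
    (by intro u hu
        simp only [Finset.mem_insert, Finset.mem_singleton] at hu
        refine ⟨a, Finset.mem_singleton_self a, ?_⟩
        rcases hu with rfl | rfl
        · rfl
        · exact e1.symm)
  have hcard : ({a, b} : Finset V).card = 2 := by
    rw [Finset.card_insert_of_notMem (by simp [hab]), Finset.card_singleton]
  rw [hcard, Finset.card_singleton] at hb
  omega

end Rules

theorem stmt_7 {V C : Type*} [Fintype V] (G : SimpleGraph V) (EH : C → C → Prop)
    (hsym : Symmetric EH) (c : Sym2 V → C)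
    (hcomp : ∀ a b : V, a ≠ b → G.Adj a b)
    (hn4 : 4 ≤ Fintype.card V) (hn9 : Fintype.card V < 9)
    (hmulti : ∀ x : V, ∃ (k : ℕ) (P : Sym2 V → Fin k),
      IsPartitionAt G EH c x k P ∧ Fintype.card V + 1 ≤ 2 * k)
    (hno4 : ¬ Cycle4Obstr3 G EH c) :
    ∀ v : V, HCycle4Through G EH c v := by
  classical
  intro v
  by_contra hnc
  have bsym : ∀ {w a b : V}, badp EH c w a b → badp EH c w b a :=
    fun h => badp_symm EH hsym c h
  have btrans : ∀ {w a b d : V}, a ≠ w → b ≠ w → d ≠ w → a ≠ b → b ≠ d → a ≠ d →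
      badp EH c w a b → badp EH c w b d → badp EH c w a d := by
    intro w a b d ha hb hd hab hbd had h1 h2
    obtain ⟨k, P, hpart, -⟩ := hmulti w
    exact badp_trans G EH c hcomp hpart ha hb hd hab hbd had h1 h2
  -- building an H-cycle of length 4 through v from good joints
  have build : ∀ x y z : V, v ≠ x → v ≠ y → v ≠ z → x ≠ y → x ≠ z → y ≠ z →
      ¬ badp EH c x v y → ¬ badp EH c y x z → ¬ badp EH c z y v →
      ¬ badp EH c v z x → False := by
    intro x y z h1 h2 h3 h4 h5 h6 g1 g2 g3 g4
    refine hnc ⟨x, y, z, h1, h2, h3, h4, h5, h6,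
      hcomp v x h1, hcomp x y h4, hcomp y z h6, hcomp z v h3.symm, ?_, ?_, ?_, ?_⟩
    · have := not_not.mp g1
      rwa [show s(x, v) = s(v, x) from Sym2.eq_swap] at this
    · have := not_not.mp g2
      rwa [show s(y, x) = s(x, y) from Sym2.eq_swap] at this
    · have := not_not.mp g3
      rwa [show s(z, y) = s(y, z) from Sym2.eq_swap] at this
    · have := not_not.mp g4
      rwa [show s(v, z) = s(z, v) from Sym2.eq_swap] at this
  -- key consequence of having no H-cycle of length 4 through v
  have KC : ∀ x y z : V, x ≠ v → y ≠ v → z ≠ v → x ≠ y → x ≠ z → y ≠ z →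
      badp EH c x v y ∨ badp EH c z v y ∨ badp EH c v x z ∨ badp EH c y x z := by
    intro x y z hxv hyv hzv hxy hxz hyz
    by_contra hcon
    push_neg at hcon
    obtain ⟨g1, g2, g3, g4⟩ := hcon
    exact build x y z (Ne.symm hxv) (Ne.symm hyv) (Ne.symm hzv) hxy hxz hyz g1 g4
      (fun hb => g2 (bsym hb)) (fun hb => g3 (bsym hb))
  -- the D, C sets
  set Dy : V → Finset V :=
    fun y => Finset.univ.filter (fun w => w ≠ v ∧ w ≠ y ∧ badp EH c w v y) with hDy
  set Cv : V → Finset V :=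
    fun w => Finset.univ.filter (fun u => u ≠ v ∧ u ≠ w ∧ badp EH c w v u) with hCv
  have hDmem : ∀ y w : V, w ∈ Dy y ↔ (w ≠ v ∧ w ≠ y ∧ badp EH c w v y) := by
    intro y w; simp [hDy]
  have hCmem : ∀ w u : V, u ∈ Cv w ↔ (u ≠ v ∧ u ≠ w ∧ badp EH c w v u) := by
    intro w u; simp [hCv]
  set S : V → Finset V := fun y => ((Finset.univ.erase v).erase y) \ Dy y with hS
  have hSmem : ∀ y u : V, u ∈ S y ↔ (u ≠ y ∧ u ≠ v ∧ ¬ badp EH c u v y) := by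
    intro y u
    simp only [hS, Finset.mem_sdiff, Finset.mem_erase, Finset.mem_univ, and_true,
      hDmem, not_and]
    constructor
    · rintro ⟨⟨h1, h2⟩, h3⟩
      exact ⟨h1, h2, fun hb => (h3 h2 h1) hb⟩
    · rintro ⟨h1, h2, h3⟩
      exact ⟨⟨h1, h2⟩, fun _ _ => h3⟩
  have hScard : ∀ y : V, y ≠ v →
      (S y).card = (Fintype.card V - 2) - (Dy y).card := by
    intro y hy
    have hsub : Dy y ⊆ (Finset.univ.erase v).erase y := by
      intro w hw
      rw [hDmem] at hw
      exact Finset.mem_erase.mpr ⟨hw.2.1, Finset.mem_erase.mpr ⟨hw.1, Finset.mem_univ w⟩⟩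
    rw [hS]
    rw [Finset.card_sdiff_of_subset hsub, Finset.card_erase_of_mem
      (Finset.mem_erase.mpr ⟨hy, Finset.mem_univ y⟩),
      Finset.card_erase_of_mem (Finset.mem_univ v), Finset.card_univ]
    omega
  -- double counting
  have hsum : ∑ y ∈ Finset.univ.erase v, (Dy y).card
      = ∑ w ∈ Finset.univ.erase v, (Cv w).card := by
    set B : Finset (V × V) := Finset.univ.filter
      (fun p => p.1 ≠ v ∧ p.2 ≠ v ∧ p.1 ≠ p.2 ∧ badp EH c p.1 v p.2) with hB
    have hBmem : ∀ p : V × V,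
        p ∈ B ↔ (p.1 ≠ v ∧ p.2 ≠ v ∧ p.1 ≠ p.2 ∧ badp EH c p.1 v p.2) := by
      intro p; simp [hB]
    have h1 : B.card = ∑ y ∈ Finset.univ.erase v, (B.filter (fun p => p.2 = y)).card :=
      Finset.card_eq_sum_card_fiberwise (fun p hp =>
        Finset.mem_erase.mpr ⟨((hBmem p).mp hp).2.1, Finset.mem_univ _⟩)
    have h2 : B.card = ∑ w ∈ Finset.univ.erase v, (B.filter (fun p => p.1 = w)).card :=
      Finset.card_eq_sum_card_fiberwise (fun p hp =>
        Finset.mem_erase.mpr ⟨((hBmem p).mp hp).1, Finset.mem_univ _⟩)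
    have hf1 : ∀ y ∈ Finset.univ.erase v,
        (B.filter (fun p => p.2 = y)).card = (Dy y).card := by
      intro y hy
      refine Finset.card_nbij' (fun p => p.1) (fun w => (w, y)) ?_ ?_ ?_ ?_
      · intro p hp
        rw [Finset.mem_coe, Finset.mem_filter, hBmem] at hp
        obtain ⟨⟨q1, q2, q3, q4⟩, q5⟩ := hp
        rw [Finset.mem_coe, hDmem]
        rw [q5] at q3 q4
        exact ⟨q1, q3, q4⟩
      · intro w hw
        rw [Finset.mem_coe, hDmem] at hw
        rw [Finset.mem_coe, Finset.mem_filter, hBmem]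
        exact ⟨⟨hw.1, Finset.mem_erase.mp hy |>.1, hw.2.1, hw.2.2⟩, rfl⟩
      · intro p hp
        rw [Finset.mem_coe, Finset.mem_filter] at hp
        exact Prod.ext rfl hp.2.symm
      · intro w _
        rfl
    have hf2 : ∀ w ∈ Finset.univ.erase v,
        (B.filter (fun p => p.1 = w)).card = (Cv w).card := by
      intro w hw
      refine Finset.card_nbij' (fun p => p.2) (fun u => (w, u)) ?_ ?_ ?_ ?_
      · intro p hp
        rw [Finset.mem_coe, Finset.mem_filter, hBmem] at hp
        obtain ⟨⟨q1, q2, q3, q4⟩, q5⟩ := hp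
        rw [Finset.mem_coe, hCmem]
        rw [q5] at q3 q4
        exact ⟨q2, fun h => q3 h.symm, q4⟩
      · intro u hu
        rw [Finset.mem_coe, hCmem] at hu
        rw [Finset.mem_coe, Finset.mem_filter, hBmem]
        exact ⟨⟨Finset.mem_erase.mp hw |>.1, hu.1, fun h => hu.2.1 h.symm, hu.2.2⟩, rfl⟩
      · intro p hp
        rw [Finset.mem_coe, Finset.mem_filter] at hp
        exact Prod.ext hp.2.symm rfl
      · intro u _
        rfl
    rw [Finset.sum_congr rfl hf1] at h1
    rw [Finset.sum_congr rfl hf2] at h2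
    rw [← h1, ← h2]
  -- fiber bounds
  have hC2 : ∀ w : V, w ≠ v → (Cv w).card ≤ 2 := by
    intro w hw
    by_contra hlt
    push_neg at hlt
    obtain ⟨a, ha, b, hb, d, hd, hab, had, hbd⟩ := Finset.two_lt_card.mp hlt
    rw [hCmem] at ha hb hd
    have := rule4 G EH c hcomp (hmulti w) (Ne.symm hw) ha.2.1 hb.2.1 hd.2.1
      (Ne.symm ha.1) (Ne.symm hb.1) (Ne.symm hd.1) hab had hbd ha.2.2 hb.2.2 hd.2.2
    omega
  -- coverage machinery (CP 'claw' lemma)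
  have CP : ∀ w w' a b d e : V,
      a ≠ w → b ≠ w → d ≠ w → e ≠ w → a ≠ w' → b ≠ w' → d ≠ w' → e ≠ w' →
      a ≠ b → a ≠ d → a ≠ e → b ≠ d → b ≠ e → d ≠ e →
      badp EH c w a b → badp EH c w a d →
      (badp EH c w a e ∨ badp EH c w' a e) →
      (badp EH c w b e ∨ badp EH c w' b e) →
      (badp EH c w d e ∨ badp EH c w' d e) → False := by
    intro w w' a b d e haw hbw hdw hew haw' hbw' hdw' hew'
      hab had hae hbd hbe hde h1 h2 h3 h4 h5
    have hbd' : badp EH c w b d := btrans hbw haw hdw (Ne.symm hab) had hbd (bsym h1) h2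
    rcases h3 with h3 | h3
    · have := rule4 G EH c hcomp (hmulti w) haw hbw hdw hew hab had hae hbd hbe hde h1 h2 h3
      omega
    rcases h4 with h4 | h4
    · have := rule4 G EH c hcomp (hmulti w) hbw haw hdw hew (Ne.symm hab) hbd hbe had hae hde
        (bsym h1) hbd' h4
      omega
    rcases h5 with h5 | h5
    · have := rule4 G EH c hcomp (hmulti w) hdw haw hbw hew (Ne.symm had) (Ne.symm hbd) hde
        hab hae hbe (bsym h2) (bsym hbd') h5
      omega
    · have := rule4 G EH c hcomp (hmulti w') hew' haw' hbw' hdw' (Ne.symm hae) (Ne.symm hbe)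
        (Ne.symm hde) hab had hbd (bsym h3) (bsym h4) (bsym h5)
      omega
  -- no 4-subset of S y can have all its pairs covered
  have cover4 : ∀ y a b d e : V, y ≠ v →
      a ≠ v → b ≠ v → d ≠ v → e ≠ v → a ≠ y → b ≠ y → d ≠ y → e ≠ y →
      a ≠ b → a ≠ d → a ≠ e → b ≠ d → b ≠ e → d ≠ e →
      (badp EH c v a b ∨ badp EH c y a b) →
      (badp EH c v a d ∨ badp EH c y a d) →
      (badp EH c v a e ∨ badp EH c y a e) →
      (badp EH c v b d ∨ badp EH c y b d) →
      (badp EH c v b e ∨ badp EH c y b e) →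
      (badp EH c v d e ∨ badp EH c y d e) → False := by
    intro y a b d e hyv hav hbv hdv hev hay hby hdy hey hab had hae hbd hbe hde
      Hab Had Hae Hbd Hbe Hde
    have fl : ∀ {p q : V}, (badp EH c v p q ∨ badp EH c y p q) →
        (badp EH c v q p ∨ badp EH c y q p) := fun h => h.imp bsym bsym
    by_cases j1 : badp EH c v a b
    · by_cases j2 : badp EH c v a d
      · exact CP v y a b d e hav hbv hdv hev hay hby hdy hey hab had hae hbd hbe hde
          j1 j2 Hae Hbe Hde
      · by_cases j3 : badp EH c v a e
        · exact CP v y a b e d hav hbv hev hdv hay hby hey hdy hab hae had hbe hbd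
            (Ne.symm hde) j1 j3 Had Hbd (fl Hde)
        · exact CP y v a d e b hay hdy hey hby hav hdv hev hbv had hae hab hde
            (Ne.symm hbd) (Ne.symm hbe) (Had.resolve_left j2) (Hae.resolve_left j3)
            (Or.inr j1) (fl Hbd).symm (fl Hbe).symm
    · by_cases j2 : badp EH c v a d
      · by_cases j3 : badp EH c v a e
        · exact CP v y a d e b hav hdv hev hbv hay hdy hey hby had hae hab hde
            (Ne.symm hbd) (Ne.symm hbe) j2 j3 Hab (fl Hbd) (fl Hbe)
        · exact CP y v a b e d hay hby hey hdy hav hbv hev hdv hab hae had hbe hbd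
            (Ne.symm hde) (Hab.resolve_left j1) (Hae.resolve_left j3) Had.symm Hbd.symm
            (fl Hde).symm
      · exact CP y v a b d e hay hby hdy hey hav hbv hdv hev hab had hae hbd hbe hde
          (Hab.resolve_left j1) (Had.resolve_left j2) Hae.symm Hbe.symm Hde.symm
  -- wrappers
  have rule2' : ∀ {w a b : V}, a ≠ w → b ≠ w → a ≠ b →
      badp EH c w a b → 5 ≤ Fintype.card V :=
    fun h1 h2 h3 hb => rule2 G EH c hcomp (hmulti _) h1 h2 h3 hb
  have rule3' : ∀ {w a b d : V}, a ≠ w → b ≠ w → d ≠ w → a ≠ b → a ≠ d → b ≠ d →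
      badp EH c w a b → badp EH c w a d → 7 ≤ Fintype.card V :=
    fun h1 h2 h3 h4 h5 h6 hb1 hb2 => rule3 G EH c hcomp (hmulti _) h1 h2 h3 h4 h5 h6 hb1 hb2
  have rule22' : ∀ {w a b p q : V}, a ≠ w → b ≠ w → p ≠ w → q ≠ w →
      a ≠ b → a ≠ p → a ≠ q → b ≠ p → b ≠ q → p ≠ q →
      badp EH c w a b → badp EH c w p q → 7 ≤ Fintype.card V :=
    fun h1 h2 h3 h4 h5 h6 h7 h8 h9 h10 hb1 hb2 =>
      rule22 G EH c hcomp (hmulti _) h1 h2 h3 h4 h5 h6 h7 h8 h9 h10 hb1 hb2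
  have rule4' : ∀ {w p a b d : V}, p ≠ w → a ≠ w → b ≠ w → d ≠ w →
      p ≠ a → p ≠ b → p ≠ d → a ≠ b → a ≠ d → b ≠ d →
      badp EH c w p a → badp EH c w p b → badp EH c w p d → 9 ≤ Fintype.card V :=
    fun h1 h2 h3 h4 h5 h6 h7 h8 h9 h10 hb1 hb2 hb3 =>
      rule4 G EH c hcomp (hmulti _) h1 h2 h3 h4 h5 h6 h7 h8 h9 h10 hb1 hb2 hb3
  have rule32' : ∀ {w a b d p q : V}, a ≠ w → b ≠ w → d ≠ w → p ≠ w → q ≠ w →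
      a ≠ b → a ≠ d → b ≠ d → a ≠ p → a ≠ q → b ≠ p → b ≠ q → d ≠ p → d ≠ q → p ≠ q →
      badp EH c w a b → badp EH c w a d → badp EH c w p q → 9 ≤ Fintype.card V :=
    fun h1 h2 h3 h4 h5 h6 h7 h8 h9 h10 h11 h12 h13 h14 h15 hb1 hb2 hb3 =>
      rule32 G EH c hcomp (hmulti _) h1 h2 h3 h4 h5 h6 h7 h8 h9 h10 h11 h12 h13 h14 h15
        hb1 hb2 hb3
  -- element extraction
  have ext3 : ∀ T : Finset V, 3 ≤ T.card →
      ∃ a ∈ T, ∃ b ∈ T, ∃ d ∈ T, a ≠ b ∧ a ≠ d ∧ b ≠ d :=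
    fun T h => Finset.two_lt_card.mp (by omega)
  have ext4 : ∀ T : Finset V, 4 ≤ T.card →
      ∃ a ∈ T, ∃ b ∈ T, ∃ d ∈ T, ∃ e ∈ T,
        a ≠ b ∧ a ≠ d ∧ a ≠ e ∧ b ≠ d ∧ b ≠ e ∧ d ≠ e := by
    intro T h
    have hpos : 0 < T.card := by omega
    obtain ⟨a, ha⟩ := Finset.card_pos.mp hpos
    have h3 : 3 ≤ (T.erase a).card := by
      rw [Finset.card_erase_of_mem ha]; omega
    obtain ⟨b, hb, d, hd, e, he, hbd, hbe, hde⟩ := ext3 _ h3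
    obtain ⟨hb1, hb2⟩ := Finset.mem_erase.mp hb
    obtain ⟨hd1, hd2⟩ := Finset.mem_erase.mp hd
    obtain ⟨he1, he2⟩ := Finset.mem_erase.mp he
    exact ⟨a, ha, b, hb2, d, hd2, e, he2,
      Ne.symm hb1, Ne.symm hd1, Ne.symm he1, hbd, hbe, hde⟩
  -- covering disjunction from the absence of a good cycle
  have getcov : ∀ y p q : V, y ≠ v → p ∈ S y → q ∈ S y → p ≠ q →
      badp EH c v p q ∨ badp EH c y p q := by
    intro y p q hyv hp hq hpq
    rw [hSmem] at hp hq
    rcases KC p y q hp.2.1 hyv hq.2.1 hp.1 hpq (Ne.symm hq.1) with h | h | h | h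
    · exact absurd h hp.2.2
    · exact absurd h hq.2.2
    · exact Or.inl h
    · exact Or.inr h
  have hUcard : (Finset.univ.erase v).card = Fintype.card V - 1 := by
    rw [Finset.card_erase_of_mem (Finset.mem_univ v), Finset.card_univ]
  -- a 3-subset of S y cannot have all its pairs covered when card V ≤ 6
  have small3 : Fintype.card V ≤ 6 → ∀ y p q r : V, y ≠ v →
      p ∈ S y → q ∈ S y → r ∈ S y → p ≠ q → p ≠ r → q ≠ r → False := by
    intro hle y p q r hyv hp hq hr hpq hpr hqr
    have c1 := getcov y p q hyv hp hq hpq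
    have c2 := getcov y p r hyv hp hr hpr
    have c3 := getcov y q r hyv hq hr hqr
    rw [hSmem] at hp hq hr
    have hpv := hp.2.1; have hqv := hq.2.1; have hrv := hr.2.1
    have hpy := hp.1; have hqy := hq.1; have hry := hr.1
    rcases c1 with h1 | h1 <;> rcases c2 with h2 | h2 <;> rcases c3 with h3 | h3
    · exact absurd (rule3' hpv hqv hrv hpq hpr hqr h1 h2) (by omega)
    · exact absurd (rule3' hpv hqv hrv hpq hpr hqr h1 h2) (by omega)
    · exact absurd (rule3' hqv hpv hrv (Ne.symm hpq) hqr hpr (bsym h1) h3) (by omega)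
    · exact absurd (rule3' hry hpy hqy (Ne.symm hpr) (Ne.symm hqr) hpq
        (bsym h2) (bsym h3)) (by omega)
    · exact absurd (rule3' hrv hpv hqv (Ne.symm hpr) (Ne.symm hqr) hpq
        (bsym h2) (bsym h3)) (by omega)
    · exact absurd (rule3' hqy hpy hry (Ne.symm hpq) hqr hpr (bsym h1) h3) (by omega)
    · exact absurd (rule3' hpy hqy hry hpq hpr hqr h1 h2) (by omega)
    · exact absurd (rule3' hpy hqy hry hpq hpr hqr h1 h2) (by omega)
  -- a 4-subset of S y cannot have all its pairs covered
  have big4 : ∀ y : V, y ≠ v → 4 ≤ (S y).card → False := by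
    intro y hyv h4
    obtain ⟨a, ha, b, hb, d, hd, e, he, hab, had, hae, hbd, hbe, hde⟩ := ext4 _ h4
    have cab := getcov y a b hyv ha hb hab
    have cad := getcov y a d hyv ha hd had
    have cae := getcov y a e hyv ha he hae
    have cbd := getcov y b d hyv hb hd hbd
    have cbe := getcov y b e hyv hb he hbe
    have cde := getcov y d e hyv hd he hde
    rw [hSmem] at ha hb hd he
    exact cover4 y a b d e hyv ha.2.1 hb.2.1 hd.2.1 he.2.1 ha.1 hb.1 hd.1 he.1
      hab had hae hbd hbe hde cab cad cae cbd cbe cde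
  have hCsum : ∑ w ∈ Finset.univ.erase v, (Cv w).card
      ≤ (Finset.univ.erase v).card * 2 := by
    have := Finset.sum_le_card_nsmul (Finset.univ.erase v) (fun w => (Cv w).card) 2
      (fun w hw => hC2 w (Finset.mem_erase.mp hw).1)
    simpa [smul_eq_mul] using this
  -- case analysis on the order
  have hcase : Fintype.card V = 4 ∨ Fintype.card V = 5 ∨ Fintype.card V = 6 ∨
      Fintype.card V = 7 ∨ Fintype.card V = 8 := by omega
  rcases hcase with hn | hn | hn | hn | hn
  · -- n = 4
    obtain ⟨x, hx, y, hy, z, hz, hxy, hxz, hyz⟩ := ext3 (Finset.univ.erase v)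
      (by rw [hUcard]; omega)
    have hxv := (Finset.mem_erase.mp hx).1
    have hyv := (Finset.mem_erase.mp hy).1
    have hzv := (Finset.mem_erase.mp hz).1
    exact build x y z (Ne.symm hxv) (Ne.symm hyv) (Ne.symm hzv) hxy hxz hyz
      (fun hb => absurd (rule2' (Ne.symm hxv).symm.symm (Ne.symm hxy).symm.symm
        (Ne.symm hyv).symm.symm hb) (by omega))
      (fun hb => absurd (rule2' hxy (Ne.symm hyz) hxz hb) (by omega))
      (fun hb => absurd (rule2' hyz (Ne.symm hzv) hyv hb) (by omega))
      (fun hb => absurd (rule2' hzv hxv (Ne.symm hxz) hb) (by omega))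
  · -- n = 5
    have hC1 : ∀ w : V, w ≠ v → (Cv w).card ≤ 1 := by
      intro w hw
      by_contra hlt
      push_neg at hlt
      obtain ⟨a, haC, b, hbC, hab⟩ := Finset.one_lt_card.mp hlt
      rw [hCmem] at haC hbC
      exact absurd (rule3' (Ne.symm hw) haC.2.1 hbC.2.1
        (Ne.symm haC.1) (Ne.symm hbC.1) hab haC.2.2 hbC.2.2) (by omega)
    have hCsum1 : ∑ w ∈ Finset.univ.erase v, (Cv w).card
        ≤ (Finset.univ.erase v).card * 1 := by
      have := Finset.sum_le_card_nsmul (Finset.univ.erase v) (fun w => (Cv w).card) 1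
        (fun w hw => hC1 w (Finset.mem_erase.mp hw).1)
      simpa [smul_eq_mul] using this
    rw [hUcard, hn] at hCsum1
    by_cases hex : ∃ y ∈ Finset.univ.erase v, (Dy y).card = 0
    · obtain ⟨y, hyU, hD0⟩ := hex
      have hyv := (Finset.mem_erase.mp hyU).1
      have h3 : 3 ≤ (S y).card := by rw [hScard y hyv, hD0]; omega
      obtain ⟨p, hp, q, hq, r, hr, hpq, hpr, hqr⟩ := ext3 _ h3
      exact small3 (by omega) y p q r hyv hp hq hr hpq hpr hqr
    · push_neg at hex
      have hlow := Finset.card_nsmul_le_sum (Finset.univ.erase v)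
        (fun y => (Dy y).card) 1
        (fun y hy => Nat.pos_of_ne_zero (hex y hy))
      have hlow' : (Finset.univ.erase v).card * 1
          ≤ ∑ y ∈ Finset.univ.erase v, (Dy y).card := by
        rw [← smul_eq_mul]; exact hlow
      rw [hUcard, hn] at hlow'
      have hCeq : ∀ w ∈ Finset.univ.erase v, (Cv w).card = 1 := by
        intro w hw
        by_contra hne
        have hlt : (Cv w).card < 1 :=
          lt_of_le_of_ne (hC1 w (Finset.mem_erase.mp hw).1) hne
        have h0 := Finset.sum_lt_sum (f := fun w => (Cv w).card)
          (g := fun _ => 1) (s := Finset.univ.erase v)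
          (fun i hi => hC1 i (Finset.mem_erase.mp hi).1) ⟨w, hw, hlt⟩
        have h' : ∑ w ∈ Finset.univ.erase v, (Cv w).card
            < ∑ _w ∈ Finset.univ.erase v, 1 := h0
        rw [Finset.sum_const, smul_eq_mul, hUcard, hn] at h'
        omega
      have hDeq : ∀ y ∈ Finset.univ.erase v, (Dy y).card = 1 := by
        intro y hy
        by_contra hne
        have hgt : 1 < (Dy y).card :=
          lt_of_le_of_ne (Nat.pos_of_ne_zero (hex y hy)) (Ne.symm hne)
        have h0 := Finset.sum_lt_sum (f := fun _ => 1)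
          (g := fun y => (Dy y).card) (s := Finset.univ.erase v)
          (fun i hi => Nat.pos_of_ne_zero (hex i hi)) ⟨y, hy, hgt⟩
        have h' : ∑ _y ∈ Finset.univ.erase v, 1
            < ∑ y ∈ Finset.univ.erase v, (Dy y).card := h0
        rw [Finset.sum_const, smul_eq_mul, hUcard, hn, hsum] at h'
        omega
      have ychar5 : ∀ y, y ∈ Finset.univ.erase v → ∀ p q : V, p ≠ v → q ≠ v →
          p ≠ y → q ≠ y → p ≠ q → ¬ badp EH c y p q := by
        intro y hyU p q hpv hqv hpy hqy hpq hbad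
        have hyv := (Finset.mem_erase.mp hyU).1
        obtain ⟨α, hCy⟩ := Finset.card_eq_one.mp (hCeq y hyU)
        have hα : α ∈ Cv y := by rw [hCy]; simp
        rw [hCmem] at hα
        by_cases hp : badp EH c y v p
        · have hq' : badp EH c y v q :=
            btrans (Ne.symm hyv) hpy hqy (Ne.symm hpv) hpq (Ne.symm hqv) hp hbad
          have hpα : p = α := by
            have : p ∈ Cv y := (hCmem y p).mpr ⟨hpv, hpy, hp⟩
            rw [hCy] at this; simpa using this
          have hqα : q = α := by
            have : q ∈ Cv y := (hCmem y q).mpr ⟨hqv, hqy, hq'⟩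
            rw [hCy] at this; simpa using this
          exact hpq (hpα.trans hqα.symm)
        · by_cases hq : badp EH c y v q
          · exact hp (btrans (Ne.symm hyv) hqy hpy (Ne.symm hqv) (Ne.symm hpq)
              (Ne.symm hpv) hq (bsym hbad))
          · have hpα : p ≠ α := fun h => hp (by rw [h]; exact hα.2.2)
            have hqα : q ≠ α := fun h => hq (by rw [h]; exact hα.2.2)
            exact absurd (rule22' (Ne.symm hyv) hα.2.1 hpy hqy (Ne.symm hα.1)
              (Ne.symm hpv) (Ne.symm hqv) (Ne.symm hpα) (Ne.symm hqα) hpq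
              hα.2.2 hbad) (by omega)
      have hSbad : ∀ y, y ∈ Finset.univ.erase v → ∀ p q : V, p ∈ S y → q ∈ S y →
          p ≠ q → badp EH c v p q := by
        intro y hyU p q hp hq hpq
        have hyv := (Finset.mem_erase.mp hyU).1
        rcases getcov y p q hyv hp hq hpq with h | h
        · exact h
        · rw [hSmem] at hp hq
          exact absurd h (ychar5 y hyU p q hp.2.1 hq.2.1 hp.1 hq.1 hpq)
      obtain ⟨y0, hy0U⟩ := Finset.card_pos.mp
        (show 0 < (Finset.univ.erase v).card by rw [hUcard, hn]; omega)
      have hy0v := (Finset.mem_erase.mp hy0U).1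
      have hS0 : 1 < (S y0).card := by
        rw [hScard y0 hy0v, hDeq y0 hy0U, hn]; omega
      obtain ⟨p, hp, q, hq, hpq⟩ := Finset.one_lt_card.mp hS0
      have b0 := hSbad y0 hy0U p q hp hq hpq
      rw [hSmem] at hp hq
      have hpU : p ∈ Finset.univ.erase v :=
        Finset.mem_erase.mpr ⟨hp.2.1, Finset.mem_univ p⟩
      have hS1 : 1 < (S p).card := by
        rw [hScard p hp.2.1, hDeq p hpU, hn]; omega
      obtain ⟨p1, hp1, q1, hq1, hp1q1⟩ := Finset.one_lt_card.mp hS1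
      have b1 := hSbad p hpU p1 q1 hp1 hq1 hp1q1
      rw [hSmem] at hp1 hq1
      have hpp1 : p ≠ p1 := Ne.symm hp1.1
      have hpq1 : p ≠ q1 := Ne.symm hq1.1
      by_cases hq01 : q = p1
      · subst hq01
        exact absurd (rule3' hq.2.1 hp.2.1 hq1.2.1 (Ne.symm hpq) hp1q1
          hpq1 (bsym b0) b1) (by omega)
      · by_cases hq02 : q = q1
        · subst hq02
          exact absurd (rule3' hq.2.1 hp.2.1 hp1.2.1 (Ne.symm hpq) (Ne.symm hp1q1)
            hpp1 (bsym b0) (bsym b1)) (by omega)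
        · exact absurd (rule22' hp.2.1 hq.2.1 hp1.2.1 hq1.2.1 hpq hpp1 hpq1
            hq01 hq02 hp1q1 b0 b1) (by omega)
  · -- n = 6
    have hC1 : ∀ w : V, w ≠ v → (Cv w).card ≤ 1 := by
      intro w hw
      by_contra hlt
      push_neg at hlt
      obtain ⟨a, haC, b, hbC, hab⟩ := Finset.one_lt_card.mp hlt
      rw [hCmem] at haC hbC
      exact absurd (rule3' (Ne.symm hw) haC.2.1 hbC.2.1
        (Ne.symm haC.1) (Ne.symm hbC.1) hab haC.2.2 hbC.2.2) (by omega)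
    have hex : ∃ y ∈ Finset.univ.erase v, (Dy y).card ≤ 1 := by
      by_contra hno
      push_neg at hno
      have hlow := Finset.card_nsmul_le_sum (Finset.univ.erase v)
        (fun y => (Dy y).card) 2 (fun y hy => hno y hy)
      have hup := Finset.sum_le_card_nsmul (Finset.univ.erase v)
        (fun w => (Cv w).card) 1 (fun w hw => hC1 w (Finset.mem_erase.mp hw).1)
      have hlow' : (Finset.univ.erase v).card * 2
          ≤ ∑ y ∈ Finset.univ.erase v, (Dy y).card := by
        rw [← smul_eq_mul]; exact hlow
      have hup' : ∑ w ∈ Finset.univ.erase v, (Cv w).card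
          ≤ (Finset.univ.erase v).card * 1 := by
        rw [← smul_eq_mul]; exact hup
      rw [hUcard, hn, hsum] at hlow'
      rw [hUcard, hn] at hup'
      omega
    obtain ⟨y, hyU, hD1⟩ := hex
    have hyv := (Finset.mem_erase.mp hyU).1
    have h3 : 3 ≤ (S y).card := by rw [hScard y hyv, hn]; omega
    obtain ⟨p, hp, q, hq, r, hr, hpq, hpr, hqr⟩ := ext3 _ h3
    exact small3 (by omega) y p q r hyv hp hq hr hpq hpr hqr
  · -- n = 7
    by_cases hex : ∃ y ∈ Finset.univ.erase v, (Dy y).card ≤ 1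
    · obtain ⟨y, hyU, hD1⟩ := hex
      have hyv := (Finset.mem_erase.mp hyU).1
      exact big4 y hyv (by rw [hScard y hyv, hn]; omega)
    · push_neg at hex
      have hlow := Finset.card_nsmul_le_sum (Finset.univ.erase v)
        (fun y => (Dy y).card) 2 (fun y hy => hex y hy)
      have hlow' : (Finset.univ.erase v).card * 2
          ≤ ∑ y ∈ Finset.univ.erase v, (Dy y).card := by
        rw [← smul_eq_mul]; exact hlow
      rw [hUcard, hn] at hlow'
      rw [hUcard, hn] at hCsum
      have hCeq : ∀ w ∈ Finset.univ.erase v, (Cv w).card = 2 := by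
        intro w hw
        by_contra hne
        have hlt : (Cv w).card < 2 :=
          lt_of_le_of_ne (hC2 w (Finset.mem_erase.mp hw).1) hne
        have h0 := Finset.sum_lt_sum (f := fun w => (Cv w).card)
          (g := fun _ => 2) (s := Finset.univ.erase v)
          (fun i hi => hC2 i (Finset.mem_erase.mp hi).1) ⟨w, hw, hlt⟩
        have h' : ∑ w ∈ Finset.univ.erase v, (Cv w).card
            < ∑ _w ∈ Finset.univ.erase v, 2 := h0
        rw [Finset.sum_const, smul_eq_mul, hUcard, hn] at h'
        omega
      have hDeq : ∀ y ∈ Finset.univ.erase v, (Dy y).card = 2 := by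
        intro y hy
        by_contra hne
        have hgt : 2 < (Dy y).card := lt_of_le_of_ne (hex y hy) (Ne.symm hne)
        have h0 := Finset.sum_lt_sum (f := fun _ => 2)
          (g := fun y => (Dy y).card) (s := Finset.univ.erase v)
          (fun i hi => hex i hi) ⟨y, hy, hgt⟩
        have h' : ∑ _y ∈ Finset.univ.erase v, 2
            < ∑ y ∈ Finset.univ.erase v, (Dy y).card := h0
        rw [Finset.sum_const, smul_eq_mul, hUcard, hn, hsum] at h'
        omega
      -- at a vertex y of U, any bad pair inside U must lie in the class of v
      have ychar : ∀ y, y ∈ Finset.univ.erase v → ∀ p q : V, p ≠ v → q ≠ v →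
          p ≠ y → q ≠ y → p ≠ q → badp EH c y p q →
          badp EH c y v p ∧ badp EH c y v q := by
        intro y hyU p q hpv hqv hpy hqy hpq hbad
        have hyv := (Finset.mem_erase.mp hyU).1
        by_cases hp : badp EH c y v p
        · exact ⟨hp, btrans (Ne.symm hyv) hpy hqy (Ne.symm hpv) hpq (Ne.symm hqv) hp hbad⟩
        · by_cases hq : badp EH c y v q
          · exact absurd (btrans (Ne.symm hyv) hqy hpy (Ne.symm hqv) (Ne.symm hpq)
              (Ne.symm hpv) hq (bsym hbad)) hp
          · obtain ⟨α, β, hαβ, hCy⟩ := Finset.card_eq_two.mp (hCeq y hyU)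
            have hα : α ∈ Cv y := by rw [hCy]; simp
            have hβ : β ∈ Cv y := by rw [hCy]; simp
            rw [hCmem] at hα hβ
            have hpα : p ≠ α := fun h => hp (by rw [h]; exact hα.2.2)
            have hpβ : p ≠ β := fun h => hp (by rw [h]; exact hβ.2.2)
            have hqα : q ≠ α := fun h => hq (by rw [h]; exact hα.2.2)
            have hqβ : q ≠ β := fun h => hq (by rw [h]; exact hβ.2.2)
            exact absurd (rule32' (Ne.symm hyv) hα.2.1 hβ.2.1 hpy hqy
              (Ne.symm hα.1) (Ne.symm hβ.1) hαβ (Ne.symm hpv) (Ne.symm hqv)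
              (Ne.symm hpα) (Ne.symm hqα) (Ne.symm hpβ) (Ne.symm hqβ) hpq
              hα.2.2 hβ.2.2 hbad) (by omega)
      -- every pair inside S y is bad at v
      have TRI : ∀ y, y ∈ Finset.univ.erase v → ∀ p q : V, p ∈ S y → q ∈ S y →
          p ≠ q → badp EH c v p q := by
        intro y hyU p q hp hq hpq
        have hyv := (Finset.mem_erase.mp hyU).1
        -- find a third element of S y
        have hq' : q ∈ (S y).erase p := Finset.mem_erase.mpr ⟨Ne.symm hpq, hq⟩
        have hpos : 0 < (((S y).erase p).erase q).card := by
          rw [Finset.card_erase_of_mem hq', Finset.card_erase_of_mem hp,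
            hScard y hyv, hDeq y hyU, hn]
          omega
        obtain ⟨r, hr⟩ := Finset.card_pos.mp hpos
        obtain ⟨hrq, hr⟩ := Finset.mem_erase.mp hr
        obtain ⟨hrp, hr⟩ := Finset.mem_erase.mp hr
        rcases getcov y p q hyv hp hq hpq with h | h
        · exact h
        · have hpS := (hSmem y p).mp hp
          have hqS := (hSmem y q).mp hq
          have hrS := (hSmem y r).mp hr
          have h1 := ychar y hyU p q hpS.2.1 hqS.2.1 hpS.1 hqS.1 hpq h
          rcases getcov y p r hyv hp hr (Ne.symm hrp) with h2 | h2
          · rcases getcov y q r hyv hq hr (Ne.symm hrq) with h3 | h3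
            · exact btrans hpS.2.1 hrS.2.1 hqS.2.1 (Ne.symm hrp) hrq hpq h2 (bsym h3)
            · have h4 := ychar y hyU q r hqS.2.1 hrS.2.1 hqS.1 hrS.1 (Ne.symm hrq) h3
              exact absurd (rule4' (Ne.symm (Finset.mem_erase.mp hyU).1)
                hpS.1 hqS.1 hrS.1 (Ne.symm hpS.2.1) (Ne.symm hqS.2.1)
                (Ne.symm hrS.2.1) hpq (Ne.symm hrp) (Ne.symm hrq)
                h1.1 h1.2 h4.2) (by omega)
          · have h4 := ychar y hyU p r hpS.2.1 hrS.2.1 hpS.1 hrS.1 (Ne.symm hrp) h2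
            exact absurd (rule4' (Ne.symm (Finset.mem_erase.mp hyU).1)
              hpS.1 hqS.1 hrS.1 (Ne.symm hpS.2.1) (Ne.symm hqS.2.1)
              (Ne.symm hrS.2.1) hpq (Ne.symm hrp) (Ne.symm hrq)
              h1.1 h1.2 h4.2) (by omega)
      -- endgame: two v-bad triangles contradict the partition size at v
      obtain ⟨y0, hy0U⟩ := Finset.card_pos.mp
        (show 0 < (Finset.univ.erase v).card by rw [hUcard, hn]; omega)
      have hy0v := (Finset.mem_erase.mp hy0U).1
      have hS0 : 3 ≤ (S y0).card := by
        rw [hScard y0 hy0v, hDeq y0 hy0U, hn]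
      obtain ⟨p, hp, q, hq, r, hr, hpq, hpr, hqr⟩ := ext3 _ hS0
      have hpS := (hSmem y0 p).mp hp
      have hqS := (hSmem y0 q).mp hq
      have hrS := (hSmem y0 r).mp hr
      have hpU : p ∈ Finset.univ.erase v :=
        Finset.mem_erase.mpr ⟨hpS.2.1, Finset.mem_univ p⟩
      have hS1 : 3 ≤ (S p).card := by
        rw [hScard p hpS.2.1, hDeq p hpU, hn]
      obtain ⟨a, ha, b, hb, d, hd, hab, had, hbd⟩ := ext3 _ hS1
      have haS := (hSmem p a).mp ha
      have hbS := (hSmem p b).mp hb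
      have hdS := (hSmem p d).mp hd
      have hSp_card : (S p).card = 3 := by
        rw [hScard p hpS.2.1, hDeq p hpU, hn]
      have hSp_eq : S p = {a, b, d} := by
        refine (Finset.eq_of_subset_of_card_le ?_ ?_).symm
        · intro u hu
          simp only [Finset.mem_insert, Finset.mem_singleton] at hu
          rcases hu with rfl | rfl | rfl
          · exact ha
          · exact hb
          · exact hd
        · rw [hSp_card]
          rw [Finset.card_insert_of_notMem (by simp [hab, had]),
            Finset.card_insert_of_notMem (by simp [hbd]), Finset.card_singleton]
      -- any element of both S y0 (other than p) and S p yields a contradiction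
      have key : ∀ t : V, t ∈ S y0 → p ≠ t → t ∈ S p → False := by
        intro t htS0 hpt htSp
        have htS := (hSmem y0 t).mp htS0
        have b1 : badp EH c v t p := bsym (TRI y0 hy0U p t hp htS0 hpt)
        rw [hSp_eq] at htSp
        simp only [Finset.mem_insert, Finset.mem_singleton] at htSp
        have hpa : p ≠ a := Ne.symm haS.1
        have hpb : p ≠ b := Ne.symm hbS.1
        have hpd : p ≠ d := Ne.symm hdS.1
        rcases htSp with rfl | rfl | rfl
        · have b2 := TRI p hpU t b ha hb hab
          have b3 := TRI p hpU t d ha hd had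
          exact absurd (rule4' htS.2.1 hpS.2.1 hbS.2.1 hdS.2.1
            (Ne.symm hpt) hab had hpb hpd hbd b1 b2 b3) (by omega)
        · have b2 := TRI p hpU t a hb ha (Ne.symm hab)
          have b3 := TRI p hpU t d hb hd hbd
          exact absurd (rule4' htS.2.1 hpS.2.1 haS.2.1 hdS.2.1
            (Ne.symm hpt) (Ne.symm hab) hbd hpa hpd had b1 b2 b3) (by omega)
        · have b2 := TRI p hpU t a hd ha (Ne.symm had)
          have b3 := TRI p hpU t b hd hb (Ne.symm hbd)
          exact absurd (rule4' htS.2.1 hpS.2.1 haS.2.1 hbS.2.1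
            (Ne.symm hpt) (Ne.symm had) (Ne.symm hbd) hpa hpb hab b1 b2 b3)
            (by omega)
      by_cases hqSp : q ∈ S p
      · exact key q hq hpq hqSp
      by_cases hrSp : r ∈ S p
      · exact key r hr hpr hrSp
      -- S y0 ∌ a,b,d gives a triangle plus a disjoint edge at v
      have b1 := TRI p hpU a b ha hb hab
      have b2 := TRI p hpU a d ha hd had
      have b3 := TRI y0 hy0U q r hq hr hqr
      have hqa : q ≠ a := fun h => hqSp (by rw [h]; exact ha)
      have hqb : q ≠ b := fun h => hqSp (by rw [h]; exact hb)
      have hqd : q ≠ d := fun h => hqSp (by rw [h]; exact hd)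
      have hra : r ≠ a := fun h => hrSp (by rw [h]; exact ha)
      have hrb : r ≠ b := fun h => hrSp (by rw [h]; exact hb)
      have hrd : r ≠ d := fun h => hrSp (by rw [h]; exact hd)
      exact absurd (rule32' haS.2.1 hbS.2.1 hdS.2.1 hqS.2.1 hrS.2.1
        hab had hbd (Ne.symm hqa) (Ne.symm hra) (Ne.symm hqb) (Ne.symm hrb)
        (Ne.symm hqd) (Ne.symm hrd) hqr b1 b2 b3) (by omega)
  · -- n = 8
    have hex : ∃ y ∈ Finset.univ.erase v, (Dy y).card ≤ 2 := by
      by_contra hno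
      push_neg at hno
      have hlow := Finset.card_nsmul_le_sum (Finset.univ.erase v)
        (fun y => (Dy y).card) 3 (fun y hy => hno y hy)
      have hlow' : (Finset.univ.erase v).card * 3
          ≤ ∑ y ∈ Finset.univ.erase v, (Dy y).card := by
        rw [← smul_eq_mul]; exact hlow
      rw [hUcard, hn, hsum] at hlow'
      rw [hUcard, hn] at hCsum
      omega
    obtain ⟨y, hyU, hD2⟩ := hex
    have hyv := (Finset.mem_erase.mp hyU).1
    exact big4 y hyv (by rw [hScard y hyv, hn]; omega)
end
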